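/- arXiv:1510.08178 — 2 statements merged into one kernel-verified Lean document; each statement's English description precedes it below -/
import Mathlib

section
/- For positive measurable f : ℝ^r → (0,∞) with N_h f well defined, ∫ (N_h f)(x) dx ≤ ∫ f(x) dx, where (N_h f)(x) = exp[∫ s̃_h(u,x) log f(u) du]. -/
/-!
For each `x`, the kernel `u ↦ ∏ k, s (u k) (x k)` is a probability density, so Jensen's inequality
for `exp` bounds `(N_h f)(x)` by the smoothed value `∫ u, s̃_h(u, x) f(u) du`. Integrating in `x`,
Fubini and `∫ x, s̃_h(u, x) dx = 1` turn the right-hand side into `∫ f`.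
-/

open MeasureTheory Real

/-- Integrate the tangent-line bound `exp c * (t - c + 1) ≤ exp t` at `c = ∫ w log g`,
`t = log g`. -/
theorem exp_integral_mul_log_le_integral_mul {α : Type*} [MeasurableSpace α] {μ : Measure α}
    {w g : α → ℝ} (hw : ∀ᵐ u ∂μ, 0 ≤ w u) (hw1 : ∫ u, w u ∂μ = 1) (hg : ∀ u, 0 < g u)
    (hlog : Integrable (fun u => w u * log (g u)) μ) (hwg : Integrable (fun u => w u * g u) μ) :
    exp (∫ u, w u * log (g u) ∂μ) ≤ ∫ u, w u * g u ∂μ := by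
  set c := ∫ u, w u * log (g u) ∂μ
  have hw_int : Integrable w μ := .of_integral_ne_zero (by simp [hw1])
  have tangent : ∀ u, exp c * (log (g u) - c + 1) ≤ g u := fun u =>
    calc exp c * (log (g u) - c + 1) ≤ exp c * exp (log (g u) - c) := by
          gcongr; exact add_one_le_exp _
      _ = g u := by rw [exp_sub, exp_log (hg u)]; field_simp
  have expand : ∀ u, w u * (exp c * (log (g u) - c + 1)) =
      exp c * (w u * log (g u) + (1 - c) * w u) := fun u => by ring
  calc exp c = ∫ u, w u * (exp c * (log (g u) - c + 1)) ∂μ := by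
        simp_rw [expand]
        rw [integral_const_mul, integral_add hlog (hw_int.const_mul _), integral_const_mul, hw1]
        ring
    _ ≤ ∫ u, w u * g u ∂μ := by
        refine integral_mono_ae ?_ hwg ?_
        · simp_rw [expand]; exact (hlog.add (hw_int.const_mul _)).const_mul _
        · filter_upwards [hw] with u hu using mul_le_mul_of_nonneg_left (tangent u) hu

theorem integral_prod_eval_eq_one {ι : Type*} [Fintype ι] {w : ι → ℝ → ℝ}
    (hw : ∀ i, ∫ v, w i v = 1) : ∫ u : ι → ℝ, ∏ i, w i (u i) = 1 := by
  simp [integral_fintype_prod_volume_eq_prod, hw]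

theorem nonlinear_smoother_mass_inequality_general {r : ℕ} (s : ℝ → ℝ → ℝ)
    (hs_nonneg : ∀ v z, 0 ≤ s v z)
    (hs1 : ∀ v, (∫ z, s v z) = 1)
    (hs2 : ∀ z, (∫ v, s v z) = 1)
    (f : (Fin r → ℝ) → ℝ) (hf_pos : ∀ x, 0 < f x)
    (hlog_int : ∀ x : Fin r → ℝ,
      Integrable (fun u : Fin r → ℝ => (∏ k, s (u k) (x k)) * Real.log (f u)))
    (hprod_int : Integrable (fun p : (Fin r → ℝ) × (Fin r → ℝ) =>
      (∏ k, s (p.1 k) (p.2 k)) * f p.1)) :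
    (∫ x : Fin r → ℝ, Real.exp (∫ u : Fin r → ℝ, (∏ k, s (u k) (x k)) * Real.log (f u))) ≤
      ∫ x : Fin r → ℝ, f x := by
  have jensen : ∀ᵐ x : Fin r → ℝ, exp (∫ u, (∏ k, s (u k) (x k)) * log (f u)) ≤
      ∫ u, (∏ k, s (u k) (x k)) * f u := by
    filter_upwards [hprod_int.prod_left_ae] with x hx
    exact exp_integral_mul_log_le_integral_mul
      (.of_forall fun _ => Finset.prod_nonneg fun k _ => hs_nonneg _ _)
      (integral_prod_eval_eq_one fun k => hs2 (x k)) hf_pos (hlog_int x) hx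
  calc (∫ x : Fin r → ℝ, exp (∫ u, (∏ k, s (u k) (x k)) * log (f u)))
      ≤ ∫ x : Fin r → ℝ, ∫ u, (∏ k, s (u k) (x k)) * f u :=
        integral_mono_of_nonneg (.of_forall fun _ => by positivity)
          hprod_int.integral_prod_right jensen
    _ = ∫ u, ∫ x : Fin r → ℝ, (∏ k, s (u k) (x k)) * f u :=
        (integral_integral_swap hprod_int).symm
    _ = ∫ u, f u := by
        congr 1 with u
        rw [integral_mul_const, integral_prod_eval_eq_one fun k => hs1 (u k), one_mul]

/-- For positive `f` with `N_h f` well defined,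
`∫ N_h f ≤ ∫ f`, where `(N_h f)(x) = exp[∫ s̃_h(u,x) log f(u) du]`. -/
theorem nonlinear_smoother_mass_inequality {r : ℕ} (s : ℝ → ℝ → ℝ)
    (hs_nonneg : ∀ v z, 0 ≤ s v z)
    (hs_int1 : ∀ v, Integrable (fun z => s v z))
    (hs_int2 : ∀ z, Integrable (fun v => s v z))
    (hs1 : ∀ v, (∫ z, s v z) = 1)
    (hs2 : ∀ z, (∫ v, s v z) = 1)
    (f : (Fin r → ℝ) → ℝ) (hf_meas : Measurable f) (hf_pos : ∀ x, 0 < f x)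
    (hf_int : Integrable f)
    (hlog_int : ∀ x : Fin r → ℝ,
      Integrable (fun u : Fin r → ℝ => (∏ k, s (u k) (x k)) * Real.log (f u)))
    (hNh_int : Integrable (fun x : Fin r → ℝ =>
      Real.exp (∫ u : Fin r → ℝ, (∏ k, s (u k) (x k)) * Real.log (f u))))
    (hprod_int : Integrable (fun p : (Fin r → ℝ) × (Fin r → ℝ) =>
      (∏ k, s (p.1 k) (p.2 k)) * f p.1)) :
    (∫ x : Fin r → ℝ, Real.exp (∫ u : Fin r → ℝ, (∏ k, s (u k) (x k)) * Real.log (f u))) ≤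
      ∫ x : Fin r → ℝ, f x :=
  nonlinear_smoother_mass_inequality_general s hs_nonneg hs1 hs2 f hf_pos hlog_int hprod_int
end

section
/- Majorization inequality of the MM step: let g be a probability density, e_j^{(0)} > 0, A_j^{(0)} invertible, and w_j^{(0)}(x) = (N_h e_j^{(0)})_{A_j^{(0)}}(x) / Σ_{j'} (N_h e_{j'}^{(0)})_{A_{j'}^{(0)}}(x), so Σ_j w_j^{(0)}(x) = 1. Define b^{(0)}(e, A) = −∫ g(x) Σ_j w_j^{(0)}(x) log[(N_h e_j)_{A_j}(x)] dx + ∫ Σ_j (e_j)_{A_j}. Then ℓ(e, A) − ℓ(e^{(0)}, A^{(0)}) ≤ b^{(0)}(e, A) − b^{(0)}(e^{(0)}, A^{(0)}) for all (e, A), where ℓ is the penalized smoothed KL objective. -/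
open MeasureTheory

/-- The linearly transformed density `g_A(x) = g(A⁻¹x)·|det A|⁻¹`. -/
noncomputable def densTransf {r : ℕ} (g : (Fin r → ℝ) → ℝ)
    (A : Matrix (Fin r) (Fin r) ℝ) : (Fin r → ℝ) → ℝ :=
  fun x => g (A⁻¹.mulVec x) * |A.det|⁻¹

/-- The nonlinear smoother `(N_h f)(y) = exp[∫ s̃_h(u,y) log f(u) du]`. -/
noncomputable def nonlinSmooth {r : ℕ} (s : ℝ → ℝ → ℝ)
    (f : (Fin r → ℝ) → ℝ) : (Fin r → ℝ) → ℝ :=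
  fun y => Real.exp (∫ u : Fin r → ℝ, (∏ k, s (u k) (y k)) * Real.log (f u))

/-- The penalized smoothed KL objective `ℓ(e,A)`. -/
noncomputable def ellObj {r m : ℕ} (s : ℝ → ℝ → ℝ) (g : (Fin r → ℝ) → ℝ)
    (e : Fin m → (Fin r → ℝ) → ℝ) (A : Fin m → Matrix (Fin r) (Fin r) ℝ) : ℝ :=
  (∫ x : Fin r → ℝ,
      g x * Real.log (g x / ∑ j, densTransf (nonlinSmooth s (e j)) (A j) x)) +
    ∫ x : Fin r → ℝ, ∑ j, densTransf (e j) (A j) x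

/-- The posterior weights `w_j^{(0)}(x)` built from `(e⁰, A⁰)`. -/
noncomputable def wgt {r m : ℕ} (s : ℝ → ℝ → ℝ)
    (e0 : Fin m → (Fin r → ℝ) → ℝ) (A0 : Fin m → Matrix (Fin r) (Fin r) ℝ)
    (j : Fin m) (x : Fin r → ℝ) : ℝ :=
  densTransf (nonlinSmooth s (e0 j)) (A0 j) x /
    ∑ j', densTransf (nonlinSmooth s (e0 j')) (A0 j') x

/-- The majorizing surrogate
`b⁰(e,A) = −∫ g Σ_j w_j⁰ log[(N_h e_j)_{A_j}] + ∫ Σ_j (e_j)_{A_j}`. -/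
noncomputable def bObj {r m : ℕ} (s : ℝ → ℝ → ℝ) (g : (Fin r → ℝ) → ℝ)
    (e0 : Fin m → (Fin r → ℝ) → ℝ) (A0 : Fin m → Matrix (Fin r) (Fin r) ℝ)
    (e : Fin m → (Fin r → ℝ) → ℝ) (A : Fin m → Matrix (Fin r) (Fin r) ℝ) : ℝ :=
  -(∫ x : Fin r → ℝ,
      g x * ∑ j, wgt s e0 A0 j x * Real.log (densTransf (nonlinSmooth s (e j)) (A j) x)) +
    ∫ x : Fin r → ℝ, ∑ j, densTransf (e j) (A j) x

lemma densTransf_pos {r : ℕ} (f : (Fin r → ℝ) → ℝ) (A : Matrix (Fin r) (Fin r) ℝ)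
    (hA : IsUnit A.det) (hf : ∀ x, 0 < f x) (x : Fin r → ℝ) :
    0 < densTransf f A x := by
  have hdet : A.det ≠ 0 := hA.ne_zero
  exact mul_pos (hf _) (inv_pos.2 (abs_pos.2 hdet))

lemma key_ineq {m : ℕ} (gx : ℝ) (hg : 0 ≤ gx) (f0 f1 : Fin m → ℝ)
    (h0 : ∀ j, 0 < f0 j) (h1 : ∀ j, 0 < f1 j) :
    gx * Real.log (gx / ∑ j, f1 j) +
      gx * ∑ j, (f0 j / ∑ j', f0 j') * Real.log (f1 j) ≤
    gx * Real.log (gx / ∑ j, f0 j) +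
      gx * ∑ j, (f0 j / ∑ j', f0 j') * Real.log (f0 j) := by
  rcases Nat.eq_zero_or_pos m with hm | hm
  · subst hm; simp
  rcases eq_or_lt_of_le hg with hgz | hgp
  · simp [← hgz]
  rw [← mul_add, ← mul_add]
  refine mul_le_mul_of_nonneg_left ?_ hg
  have hne : (Finset.univ : Finset (Fin m)).Nonempty := ⟨⟨0, hm⟩, Finset.mem_univ _⟩
  have hF0 : 0 < ∑ j, f0 j := Finset.sum_pos (fun j _ => h0 j) hne
  have hF1 : 0 < ∑ j, f1 j := Finset.sum_pos (fun j _ => h1 j) hne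
  rw [Real.log_div hgp.ne' hF1.ne', Real.log_div hgp.ne' hF0.ne']
  have hw1 : ∑ j, f0 j / ∑ j', f0 j' = 1 := by
    rw [← Finset.sum_div, div_self hF0.ne']
  have jensen : ∑ j, (f0 j / ∑ j', f0 j') * Real.log (f1 j / f0 j) ≤
      Real.log (∑ j, (f0 j / ∑ j', f0 j') * (f1 j / f0 j)) := by
    have := strictConcaveOn_log_Ioi.concaveOn.le_map_sum
      (t := (Finset.univ : Finset (Fin m)))
      (w := fun j => f0 j / ∑ j', f0 j')
      (p := fun j => f1 j / f0 j)
      (fun j _ => div_nonneg (h0 j).le hF0.le) hw1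
      (fun j _ => div_pos (h1 j) (h0 j))
    simpa using this
  have hsum : ∑ j, (f0 j / ∑ j', f0 j') * (f1 j / f0 j)
      = (∑ j, f1 j) / ∑ j', f0 j' := by
    rw [Finset.sum_div]
    refine Finset.sum_congr rfl fun j _ => ?_
    rw [div_mul_div_comm, mul_comm (f0 j) (f1 j), mul_div_mul_right _ _ (h0 j).ne']
  have hexp : ∑ j, (f0 j / ∑ j', f0 j') * Real.log (f1 j / f0 j)
      = (∑ j, (f0 j / ∑ j', f0 j') * Real.log (f1 j))
        - ∑ j, (f0 j / ∑ j', f0 j') * Real.log (f0 j) := by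
    rw [← Finset.sum_sub_distrib]
    refine Finset.sum_congr rfl fun j _ => ?_
    rw [Real.log_div (h1 j).ne' (h0 j).ne', mul_sub]
  rw [hsum, Real.log_div hF1.ne' hF0.ne', hexp] at jensen
  linarith

/-- MM majorization inequality:
`ℓ(e,A) − ℓ(e⁰,A⁰) ≤ b⁰(e,A) − b⁰(e⁰,A⁰)` for all `(e,A)`. -/
theorem mm_majorization {r m : ℕ} (s : ℝ → ℝ → ℝ)
    (hs_nonneg : ∀ v z, 0 ≤ s v z)
    (hs_int1 : ∀ v, Integrable (fun z => s v z))
    (hs_int2 : ∀ z, Integrable (fun v => s v z))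
    (hs1 : ∀ v, (∫ z, s v z) = 1)
    (hs2 : ∀ z, (∫ v, s v z) = 1)
    (g : (Fin r → ℝ) → ℝ) (hg_nonneg : ∀ x, 0 ≤ g x)
    (hg_int : Integrable g) (hg_one : (∫ x : Fin r → ℝ, g x) = 1)
    (e0 e : Fin m → (Fin r → ℝ) → ℝ) (A0 A : Fin m → Matrix (Fin r) (Fin r) ℝ)
    (he0_pos : ∀ j x, 0 < e0 j x) (he0_int : ∀ j, Integrable (e0 j))
    (hA0 : ∀ j, IsUnit (A0 j).det)
    (he_pos : ∀ j x, 0 < e j x) (he_int : ∀ j, Integrable (e j))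
    (hA : ∀ j, IsUnit (A j).det)
    (hℓ1 : Integrable (fun x : Fin r → ℝ =>
      g x * Real.log (g x / ∑ j, densTransf (nonlinSmooth s (e j)) (A j) x)))
    (hℓ0 : Integrable (fun x : Fin r → ℝ =>
      g x * Real.log (g x / ∑ j, densTransf (nonlinSmooth s (e0 j)) (A0 j) x)))
    (hp1 : Integrable (fun x : Fin r → ℝ => ∑ j, densTransf (e j) (A j) x))
    (hp0 : Integrable (fun x : Fin r → ℝ => ∑ j, densTransf (e0 j) (A0 j) x))
    (hb1 : Integrable (fun x : Fin r → ℝ =>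
      g x * ∑ j, wgt s e0 A0 j x * Real.log (densTransf (nonlinSmooth s (e j)) (A j) x)))
    (hb0 : Integrable (fun x : Fin r → ℝ =>
      g x * ∑ j, wgt s e0 A0 j x *
        Real.log (densTransf (nonlinSmooth s (e0 j)) (A0 j) x))) :
    ellObj s g e A - ellObj s g e0 A0 ≤
      bObj s g e0 A0 e A - bObj s g e0 A0 e0 A0 := by
  have hpos1 : ∀ j (x : Fin r → ℝ), 0 < densTransf (nonlinSmooth s (e j)) (A j) x :=
    fun j x => densTransf_pos _ _ (hA j) (fun y => Real.exp_pos _) x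
  have hpos0 : ∀ j (x : Fin r → ℝ), 0 < densTransf (nonlinSmooth s (e0 j)) (A0 j) x :=
    fun j x => densTransf_pos _ _ (hA0 j) (fun y => Real.exp_pos _) x
  have hmono :
      (∫ x : Fin r → ℝ,
        (g x * Real.log (g x / ∑ j, densTransf (nonlinSmooth s (e j)) (A j) x)
          + g x * ∑ j, wgt s e0 A0 j x *
            Real.log (densTransf (nonlinSmooth s (e j)) (A j) x))) ≤
      (∫ x : Fin r → ℝ,
        (g x * Real.log (g x / ∑ j, densTransf (nonlinSmooth s (e0 j)) (A0 j) x)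
          + g x * ∑ j, wgt s e0 A0 j x *
            Real.log (densTransf (nonlinSmooth s (e0 j)) (A0 j) x))) := by
    refine integral_mono (hℓ1.add hb1) (hℓ0.add hb0) fun x => ?_
    simp only [wgt]
    exact key_ineq (g x) (hg_nonneg x) _ _ (fun j => hpos0 j x) (fun j => hpos1 j x)
  rw [integral_add hℓ1 hb1, integral_add hℓ0 hb0] at hmono
  simp only [ellObj, bObj]
  linarith
end
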